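/- arXiv:2203.07582 — 2 statements merged into one kernel-verified Lean document; each statement's English description precedes it below -/
import Mathlib

section
/- Let R be a ring with identity, b ∈ R with group inverse b^#, and p ∈ R an idempotent such that pb(1-p) = 0. If b(1-p) has a group inverse, then (b(1-p))^# = b^#(1-p) and pb has group inverse (pb)^# = pb^#. -/
/-- `x` is a group inverse of `a`. -/
def IsGroupInv {R : Type*} [Ring R] (a x : R) : Prop :=
  x * a * x = x ∧ a * x = x * a ∧ a * x * a = a

/-! With `q = 1 - p` and `a = b q`, the hypothesis `p b q = 0` gives `q a = a`, hence `a² = b a`.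
Combined with `b^# = (b^#)² b` and `a^# = a (a^#)²`, this forces `a^# = b^# q`. In particular
`p b^# q = p a (a^#)² = 0`, so both `b` and `b^#` lie in `{x | p x q = 0}`, on which `x ↦ p x` is
multiplicative (`p x p = p x` there); it therefore carries the group inverse pair `(b, b^#)` to
`(p b, p b^#)`. -/

section GroupInverse

variable {R : Type*} [Ring R]

namespace IsGroupInv

variable {a x : R}

theorem inv_mul_inv_mul (h : IsGroupInv a x) : x * x * a = x := by
  rw [mul_assoc, ← h.2.1, ← mul_assoc, h.1]

theorem mul_inv_mul_inv (h : IsGroupInv a x) : a * (x * x) = x := by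
  rw [← mul_assoc, h.2.1, h.1]

theorem mul_mul_inv (h : IsGroupInv a x) : a * a * x = a := by
  rw [mul_assoc, h.2.1, ← mul_assoc, h.2.2]

theorem inv_mul_mul (h : IsGroupInv a x) : x * a * a = a := by
  rw [← h.2.1, h.2.2]

theorem eq_mul_of_mul_right {b x c w : R} (hb : IsGroupInv b x) (hw : IsGroupInv (b * c) w)
    (hc : c * (b * c) = b * c) : w = x * c := by
  have hcw : c * w = w := by
    rw [← hw.mul_inv_mul_inv, ← mul_assoc, hc]
  have hsq : b * c * (b * c) = b * (b * c) := by
    rw [mul_assoc b c, hc]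
  symm
  calc x * c = x * x * b * c := by rw [hb.inv_mul_inv_mul]
    _ = x * x * (b * c * (b * c) * w) := by rw [hw.mul_mul_inv, mul_assoc (x * x)]
    _ = x * x * b * (b * c) * w := by rw [hsq]; simp only [mul_assoc]
    _ = x * b * (c * w) := by rw [hb.inv_mul_inv_mul]; simp only [mul_assoc]
    _ = x * b * b * c * (w * w) := by
      rw [hcw]; nth_rw 1 [← hw.mul_inv_mul_inv]; simp only [mul_assoc]
    _ = w := by rw [hb.inv_mul_mul, hw.mul_inv_mul_inv]

end IsGroupInv

variable {p x y : R}

theorem mul_mul_mul_eq_of_mul_one_sub_eq_zero (hx : p * x * (1 - p) = 0) :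
    p * x * (p * y) = p * (x * y) := by
  have hxp : p * x * p = p * x := by
    rw [mul_sub, mul_one, sub_eq_zero] at hx
    exact hx.symm
  rw [← mul_assoc, hxp, mul_assoc]

theorem mul_mul_mul_one_sub_eq_zero (hx : p * x * (1 - p) = 0) (hy : p * y * (1 - p) = 0) :
    p * (x * y) * (1 - p) = 0 := by
  rw [← mul_mul_mul_eq_of_mul_one_sub_eq_zero hx, mul_assoc, hy, mul_zero]

theorem IsGroupInv.mul_left_of_mul_one_sub_eq_zero (h : IsGroupInv x y)
    (hx : p * x * (1 - p) = 0) (hy : p * y * (1 - p) = 0) : IsGroupInv (p * x) (p * y) := by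
  refine ⟨?_, ?_, ?_⟩
  · rw [mul_mul_mul_eq_of_mul_one_sub_eq_zero hy,
      mul_mul_mul_eq_of_mul_one_sub_eq_zero (mul_mul_mul_one_sub_eq_zero hy hx), h.1]
  · rw [mul_mul_mul_eq_of_mul_one_sub_eq_zero hx, mul_mul_mul_eq_of_mul_one_sub_eq_zero hy, h.2.1]
  · rw [mul_mul_mul_eq_of_mul_one_sub_eq_zero hx,
      mul_mul_mul_eq_of_mul_one_sub_eq_zero (mul_mul_mul_one_sub_eq_zero hx hy), h.2.2]

end GroupInverse

theorem stmt_2_general {R : Type*} [Ring R] (b bs p : R)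
    (hb : IsGroupInv b bs)
    (htriangular : p * b * (1 - p) = 0)
    (hgi : ∃ w, IsGroupInv (b * (1 - p)) w) :
    IsGroupInv (b * (1 - p)) (bs * (1 - p)) ∧ IsGroupInv (p * b) (p * bs) := by
  obtain ⟨w, hw⟩ := hgi
  have hq : (1 - p) * (b * (1 - p)) = b * (1 - p) := by
    rw [sub_mul, one_mul, ← mul_assoc, htriangular, sub_zero]
  have hw_eq : w = bs * (1 - p) := hb.eq_mul_of_mul_right hw hq
  have hbs : p * bs * (1 - p) = 0 := by
    rw [mul_assoc, ← hw_eq, ← hw.mul_inv_mul_inv, ← mul_assoc, ← mul_assoc p b, htriangular, zero_mul]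
  exact ⟨hw_eq ▸ hw, hb.mul_left_of_mul_one_sub_eq_zero htriangular hbs⟩

theorem stmt_2 {R : Type*} [Ring R] (b bs p : R)
    (hb : IsGroupInv b bs)
    (hp : p * p = p)
    (htriangular : p * b * (1 - p) = 0)
    (hgi : ∃ w, IsGroupInv (b * (1 - p)) w) :
    IsGroupInv (b * (1 - p)) (bs * (1 - p)) ∧ IsGroupInv (p * b) (p * bs) :=
  stmt_2_general b bs p hb htriangular hgi
end

section
/- Let R be a ring with identity and a, b ∈ R with group inverses such that ab = ba. Then a + b has a group inverse if and only if aa^#b + bb^#a has a group inverse. -/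
namespace IsGroupInv

section Ring

variable {R : Type*} [Ring R] {a x : R}

theorem commute {z : R} (h : IsGroupInv a x) (hz : Commute z a) : Commute z x := by
  obtain ⟨hxax, hax, haxa⟩ := h
  have hza (w : R) : a * (z * w) = z * (a * w) := by rw [← mul_assoc, ← hz.eq, mul_assoc]
  have haxx : a * (x * x) = x := by rw [← mul_assoc, hax, hxax]
  have hxxa : x * x * a = x := by rw [mul_assoc, ← hax, ← mul_assoc, hxax]
  have haxa' : a * (x * a) = a := by rw [← mul_assoc, haxa]
  calc z * x = z * (a * (x * x)) := by rw [haxx]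
    _ = a * (x * (a * (z * (x * x)))) := by simp only [← mul_assoc, haxa, hz.eq]
    _ = a * (x * (z * x)) := by rw [hza, haxx]
    _ = x * (z * (x * a)) := by rw [← mul_assoc, hax, mul_assoc, hza, hax]
    _ = x * (x * (a * (z * (x * a)))) := by simp only [← mul_assoc, hxxa]
    _ = x * (x * (z * a)) := by rw [hza, haxa']
    _ = x * z := by rw [hz.eq]; simp only [← mul_assoc, hxxa]

theorem mem_centralizer {s : Set R} (h : IsGroupInv a x) (ha : a ∈ s.centralizer) :
    x ∈ s.centralizer :=
  fun z hz ↦ h.commute (ha z hz)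

theorem isIdempotentElem_mul (h : IsGroupInv a x) : IsIdempotentElem (a * x) := by
  rw [IsIdempotentElem, ← mul_assoc, h.2.2]

theorem coe_iff {S : Subring R} {a x : S} : IsGroupInv (a : R) x ↔ IsGroupInv a x := by
  simp only [IsGroupInv, ← Subring.coe_mul, Subtype.ext_iff]

theorem exists_coe_centralizer_iff {s : Set R} (a : Subring.centralizer s) :
    (∃ x, IsGroupInv (a : R) x) ↔ ∃ x, IsGroupInv a x := by
  constructor
  · rintro ⟨x, hx⟩
    exact ⟨⟨x, hx.mem_centralizer a.2⟩, coe_iff.1 hx⟩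
  · rintro ⟨x, hx⟩
    exact ⟨x, coe_iff.2 hx⟩

end Ring

section CommRing

variable {R : Type*} [CommRing R] {a x g : R}

theorem mul_left_of_isIdempotentElem (hg : IsIdempotentElem g) (h : IsGroupInv a x) :
    IsGroupInv (g * a) (g * x) := by
  obtain ⟨h₁, -, h₃⟩ := h
  refine ⟨?_, mul_comm _ _, ?_⟩
  · linear_combination g ^ 3 * h₁ + x * (g + 1) * hg.eq
  · linear_combination g ^ 3 * h₃ + a * (g + 1) * hg.eq

theorem _root_.IsIdempotentElem.peirce_mul (hg : IsIdempotentElem g) (u v u' v' : R) :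
    (g * u + (1 - g) * v) * (g * u' + (1 - g) * v') = g * (u * u') + (1 - g) * (v * v') := by
  linear_combination (u * u' - u * v' - v * u' + v * v') * hg.eq

theorem peirce_add {a' x' : R} (hg : IsIdempotentElem g) (h : IsGroupInv a x)
    (h' : IsGroupInv a' x') :
    IsGroupInv (g * a + (1 - g) * a') (g * x + (1 - g) * x') := by
  obtain ⟨h₁, -, h₃⟩ := h
  obtain ⟨h₁', -, h₃'⟩ := h'
  refine ⟨?_, mul_comm _ _, ?_⟩
  · rw [hg.peirce_mul, hg.peirce_mul, h₁, h₁']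
  · rw [hg.peirce_mul, hg.peirce_mul, h₃, h₃']

theorem exists_iff_of_isIdempotentElem (hg : IsIdempotentElem g) (a : R) :
    (∃ x, IsGroupInv a x) ↔
      (∃ x, IsGroupInv (g * a) x) ∧ ∃ x, IsGroupInv ((1 - g) * a) x := by
  constructor
  · rintro ⟨x, hx⟩
    exact ⟨⟨_, hx.mul_left_of_isIdempotentElem hg⟩, ⟨_, hx.mul_left_of_isIdempotentElem hg.one_sub⟩⟩
  · rintro ⟨⟨x, hx⟩, ⟨x', hx'⟩⟩
    refine ⟨g * x + (1 - g) * x', ?_⟩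
    convert hx.peirce_add hg hx' using 1
    linear_combination (-2 * a) * hg.eq

theorem exists_add_iff {b as bs : R} (ha : IsGroupInv a as) (hb : IsGroupInv b bs) :
    (∃ w, IsGroupInv (a + b) w) ↔ ∃ w, IsGroupInv (a * as * b + b * bs * a) w := by
  have he := ha.isIdempotentElem_mul
  have hf := hb.isIdempotentElem_mul
  have hcorner : a * as * (b * bs) * (a + b) = a * as * b + b * bs * a := by
    linear_combination a * as * hb.2.2 + b * bs * ha.2.2
  have hcompl : (1 - a * as * (b * bs)) * (a + b)
      = (1 - b * bs) * a + (1 - (1 - b * bs)) * ((1 - a * as) * b) := by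
    linear_combination (-(b * bs)) * ha.2.2 - hb.2.2
  rw [exists_iff_of_isIdempotentElem (he.mul hf), hcorner, and_iff_left]
  exact ⟨_, hcompl ▸ ha.peirce_add hf.one_sub (hb.mul_left_of_isIdempotentElem he.one_sub)⟩

end CommRing

end IsGroupInv

abbrev Subring.centralizerCentralizerCommRing {R : Type*} [Ring R] {s : Set R}
    (hs : ∀ x ∈ s, ∀ y ∈ s, x * y = y * x) : CommRing (Subring.centralizer s.centralizer) :=
  { (inferInstance : Ring (Subring.centralizer s.centralizer)) with
    mul_comm := fun x y ↦ Subtype.ext (Set.centralizer_centralizer_comm_of_comm hs _ x.2 _ y.2) }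

theorem stmt_10 {R : Type*} [Ring R] (a b as bs : R)
    (ha : IsGroupInv a as)
    (hb : IsGroupInv b bs)
    (h : a * b = b * a) :
    (∃ w, IsGroupInv (a + b) w) ↔
      (∃ w, IsGroupInv (a * as * b + b * bs * a) w) := by
  have hab : ∀ x ∈ ({a, b} : Set R), ∀ y ∈ ({a, b} : Set R), x * y = y * x := by
    rintro x (rfl | rfl) y (rfl | rfl)
    exacts [rfl, h, h.symm, rfl]
  let _ := Subring.centralizerCentralizerCommRing hab
  have ha' : a ∈ Subring.centralizer (Set.centralizer {a, b}) :=
    Set.subset_centralizer_centralizer (by simp)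
  have hb' : b ∈ Subring.centralizer (Set.centralizer {a, b}) :=
    Set.subset_centralizer_centralizer (by simp)
  let A : Subring.centralizer (Set.centralizer {a, b}) := ⟨a, ha'⟩
  let B : Subring.centralizer (Set.centralizer {a, b}) := ⟨b, hb'⟩
  have hA : IsGroupInv A ⟨as, ha.mem_centralizer ha'⟩ := IsGroupInv.coe_iff.1 ha
  have hB : IsGroupInv B ⟨bs, hb.mem_centralizer hb'⟩ := IsGroupInv.coe_iff.1 hb
  exact (IsGroupInv.exists_coe_centralizer_iff (A + B)).trans
    ((hA.exists_add_iff hB).trans (IsGroupInv.exists_coe_centralizer_iff _).symm)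
end
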